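/- arXiv:1712.06036 — 2 statements merged into one kernel-verified Lean document; each statement's English description precedes it below -/
import Mathlib

section
/- Let Q be a convex subset of a normed vector space E, let f : E → ℝ be convex and differentiable on Q with ν-Hölder continuous gradient, i.e. ‖∇f(x) − ∇f(y)‖_* ≤ M_ν‖x−y‖^ν for all x,y ∈ Q, where ν ∈ [0,1] and M_ν < ∞. Then for every δ > 0 and L ≥ [((1−ν)/(1+ν))·(1/(2δ))]^((1−ν)/(1+ν)) · M_ν^(2/(1+ν)), one has f(y) ≤ f(x) + ⟨∇f(x), y−x⟩ + (L/2)‖x−y‖² + δ for all x, y ∈ Q. -/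
/-!
Along the segment from `x` to `y`, the subgradient inequality bounds each increment of `f` by
the inner product of `g` at the right end point with the step, and Hölder continuity bounds how
far that exceeds `⟪g x, y - x⟫`. Summing over a uniform partition and letting the mesh go to zero
gives `f y - f x - ⟪g x, y - x⟫ ≤ M / (1 + ν) * ‖y - x‖ ^ (1 + ν)`. Weighted AM-GM with weights
`(1 + ν) / 2` and `(1 - ν) / 2` then splits `‖y - x‖ ^ (1 + ν)` into a quadratic term and `δ`;
the threshold for `L` is exactly where the AM-GM bound meets `M / (1 + ν) * ‖y - x‖ ^ (1 + ν)`.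
-/

open Finset Set Filter Topology RealInnerProductSpace

theorem sum_range_one_add_rpow_le {ν : ℝ} (hν : 0 ≤ ν) (n : ℕ) :
    ∑ k ∈ range n, (1 + (k : ℝ)) ^ ν ≤ (1 + n) ^ (1 + ν) / (1 + ν) := by
  have hmono : MonotoneOn (fun x : ℝ => x ^ ν) (Icc 1 (1 + n)) :=
    (Real.monotoneOn_rpow_Ici_of_exponent_nonneg hν).mono fun x hx => zero_le_one.trans hx.1
  calc ∑ k ∈ range n, (1 + (k : ℝ)) ^ ν
      ≤ ∫ x in (1 : ℝ)..1 + n, x ^ ν := hmono.sum_le_integral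
    _ = ((1 + n) ^ (ν + 1) - 1) / (ν + 1) := by
      rw [integral_rpow (Or.inl (by linarith)), Real.one_rpow]
    _ ≤ (1 + n) ^ (1 + ν) / (1 + ν) := by
      rw [add_comm ν]
      gcongr
      linarith

section Subgradient

variable {φ ψ : ℝ → ℝ} {K ν : ℝ}

theorem sub_sub_le_of_holder_subgradient_of_nat (hν : 0 ≤ ν) (hK : 0 ≤ K)
    (hφ : ∀ s ∈ Icc (0 : ℝ) 1, ∀ t ∈ Icc (0 : ℝ) 1, φ t - φ s ≤ ψ t * (t - s))
    (hψ : ∀ t ∈ Icc (0 : ℝ) 1, ψ t - ψ 0 ≤ K * t ^ ν) {n : ℕ} (hn : n ≠ 0) :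
    φ 1 - φ 0 - ψ 0 ≤ K / (1 + ν) * (1 + (n : ℝ)⁻¹) ^ (1 + ν) := by
  have hn0 : (0 : ℝ) < n := by positivity
  set h : ℝ := (n : ℝ)⁻¹
  have hh0 : 0 < h := by positivity
  have hnh : (n : ℝ) * h = 1 := mul_inv_cancel₀ hn0.ne'
  have hmem : ∀ k ≤ n, (k : ℝ) * h ∈ Icc (0 : ℝ) 1 := fun k hk =>
    ⟨by positivity, by rw [← hnh]; gcongr⟩
  have hstep : ∀ k ∈ range n, φ ((k + 1 : ℕ) * h) - φ (k * h) ≤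
      ψ 0 * h + K * h ^ (1 + ν) * (1 + (k : ℝ)) ^ ν := by
    intro k hk
    have hk : k + 1 ≤ n := mem_range.mp hk
    have hφk := hφ _ (hmem k (Nat.le_of_succ_le hk)) _ (hmem (k + 1) hk)
    have hψk := hψ _ (hmem (k + 1) hk)
    have hpow : ((k + 1 : ℕ) * h) ^ ν * h = h ^ (1 + ν) * (1 + (k : ℝ)) ^ ν := by
      rw [Real.mul_rpow (by positivity) hh0.le, Real.rpow_add hh0, Real.rpow_one]
      push_cast; rw [add_comm (k : ℝ) 1]; ring
    calc φ ((k + 1 : ℕ) * h) - φ (k * h) ≤ ψ ((k + 1 : ℕ) * h) * h := by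
          convert hφk using 2; push_cast; ring
      _ ≤ (ψ 0 + K * ((k + 1 : ℕ) * h) ^ ν) * h := by gcongr; linarith
      _ = _ := by rw [add_mul, mul_assoc, hpow, mul_assoc]
  calc φ 1 - φ 0 - ψ 0
      = ∑ k ∈ range n, (φ ((k + 1 : ℕ) * h) - φ (k * h)) - ψ 0 := by
        rw [sum_range_sub (fun k : ℕ => φ (k * h)), hnh]; simp
    _ ≤ ∑ k ∈ range n, (ψ 0 * h + K * h ^ (1 + ν) * (1 + (k : ℝ)) ^ ν) - ψ 0 := by
        gcongr with k hk; exact hstep k hk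
    _ = K * h ^ (1 + ν) * ∑ k ∈ range n, (1 + (k : ℝ)) ^ ν := by
        rw [sum_add_distrib, sum_const, card_range, nsmul_eq_mul, ← mul_sum,
          mul_left_comm, hnh]; ring
    _ ≤ K * h ^ (1 + ν) * ((1 + n) ^ (1 + ν) / (1 + ν)) := by
        gcongr; exact sum_range_one_add_rpow_le hν n
    _ = K / (1 + ν) * (1 + h) ^ (1 + ν) := by
        rw [← mul_div_assoc, mul_assoc, ← Real.mul_rpow hh0.le (by positivity)]
        rw [show h * (1 + n) = 1 + h by rw [mul_add, mul_comm h (n : ℝ), hnh]; ring]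
        ring

theorem sub_sub_le_of_holder_subgradient (hν : 0 ≤ ν) (hK : 0 ≤ K)
    (hφ : ∀ s ∈ Icc (0 : ℝ) 1, ∀ t ∈ Icc (0 : ℝ) 1, φ t - φ s ≤ ψ t * (t - s))
    (hψ : ∀ t ∈ Icc (0 : ℝ) 1, ψ t - ψ 0 ≤ K * t ^ ν) :
    φ 1 - φ 0 - ψ 0 ≤ K / (1 + ν) := by
  have hlim : Tendsto (fun n : ℕ => K / (1 + ν) * (1 + (n : ℝ)⁻¹) ^ (1 + ν)) atTop
      (𝓝 (K / (1 + ν) * (1 + 0) ^ (1 + ν))) :=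
    ((tendsto_const_nhds.add tendsto_inv_atTop_nhds_zero_nat).rpow_const
      (Or.inr (by linarith))).const_mul _
  rw [add_zero, Real.one_rpow, mul_one] at hlim
  exact ge_of_tendsto hlim ((eventually_ne_atTop 0).mono fun n hn =>
    sub_sub_le_of_holder_subgradient_of_nat hν hK hφ hψ hn)

end Subgradient

theorem Convex.sub_sub_inner_le_of_holder {E : Type*} [NormedAddCommGroup E]
    [InnerProductSpace ℝ E] {Q : Set E} (hQ : Convex ℝ Q) {f : E → ℝ} {g : E → E} {ν M : ℝ}
    (hν : 0 ≤ ν) (hM : 0 ≤ M)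
    (hconv : ∀ x ∈ Q, ∀ y ∈ Q, f x + ⟪g x, y - x⟫ ≤ f y)
    (hHolder : ∀ x ∈ Q, ∀ y ∈ Q, ‖g x - g y‖ ≤ M * ‖x - y‖ ^ ν)
    {x y : E} (hx : x ∈ Q) (hy : y ∈ Q) :
    f y - f x - ⟪g x, y - x⟫ ≤ M / (1 + ν) * ‖y - x‖ ^ (1 + ν) := by
  set z : ℝ → E := fun t => x + t • (y - x)
  have hz : ∀ t ∈ Icc (0 : ℝ) 1, z t ∈ Q := fun t ht => hQ.add_smul_sub_mem hx hy ht
  have h := sub_sub_le_of_holder_subgradient (φ := fun t => f (z t))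
    (ψ := fun t => ⟪g (z t), y - x⟫) (K := M * ‖y - x‖ ^ (1 + ν)) hν (by positivity)
    (fun s hs t ht => by
      have := hconv _ (hz t ht) _ (hz s hs)
      rw [show z s - z t = (s - t) • (y - x) by simp only [z]; module, inner_smul_right] at this
      linarith)
    (fun t ht => by
      have hzt : z t - z 0 = t • (y - x) := by simp only [z]; module
      calc ⟪g (z t), y - x⟫ - ⟪g (z 0), y - x⟫ = ⟪g (z t) - g (z 0), y - x⟫ :=
            (inner_sub_left _ _ _).symm
        _ ≤ ‖g (z t) - g (z 0)‖ * ‖y - x‖ := real_inner_le_norm _ _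
        _ ≤ M * ‖z t - z 0‖ ^ ν * ‖y - x‖ := by
            gcongr; exact hHolder _ (hz t ht) _ (hz 0 ⟨le_rfl, zero_le_one⟩)
        _ = M * ‖y - x‖ ^ (1 + ν) * t ^ ν := by
            rw [hzt, norm_smul, Real.norm_of_nonneg ht.1, Real.mul_rpow ht.1 (norm_nonneg _),
              Real.rpow_add' (norm_nonneg _) (by linarith), Real.rpow_one]
            ring)
  simpa [z, div_mul_eq_mul_div] using h

theorem holder_threshold_mul_eq {ν M δ : ℝ} (hν0 : 0 ≤ ν) (hν1 : ν < 1) (hM : 0 ≤ M)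
    (hδ : 0 < δ) :
    ((((1 - ν) / (1 + ν) * (1 / (2 * δ))) ^ ((1 - ν) / (1 + ν)) * M ^ (2 / (1 + ν))) /
        (1 + ν)) ^ ((1 + ν) / 2) * (2 * δ / (1 - ν)) ^ ((1 - ν) / 2) = M / (1 + ν) := by
  set c := (1 - ν) / (1 + ν) * (1 / (2 * δ))
  have h1ν : 0 < 1 + ν := by linarith
  have h1ν' : 0 < 1 - ν := by linarith
  have hc : 0 < c := by positivity
  have hcp : c * (2 * δ / (1 - ν)) = (1 + ν)⁻¹ := by simp only [c]; field_simp
  rw [Real.div_rpow (by positivity) h1ν.le, Real.mul_rpow (by positivity) (by positivity),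
    ← Real.rpow_mul hc.le, ← Real.rpow_mul hM,
    show (1 - ν) / (1 + ν) * ((1 + ν) / 2) = (1 - ν) / 2 by field_simp,
    show 2 / (1 + ν) * ((1 + ν) / 2) = 1 by field_simp, Real.rpow_one]
  calc c ^ ((1 - ν) / 2) * M / (1 + ν) ^ ((1 + ν) / 2) * (2 * δ / (1 - ν)) ^ ((1 - ν) / 2)
      = M / ((1 + ν) ^ ((1 + ν) / 2) * (1 + ν) ^ ((1 - ν) / 2)) := by
        rw [div_mul_eq_mul_div, mul_right_comm, ← Real.mul_rpow hc.le (by positivity), hcp,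
          Real.inv_rpow h1ν.le]
        field_simp
    _ = M / (1 + ν) := by
        rw [← Real.rpow_add h1ν, show (1 + ν) / 2 + (1 - ν) / 2 = 1 by ring, Real.rpow_one]

theorem mul_rpow_one_add_le_sq_add {ν M δ L r : ℝ} (hν0 : 0 ≤ ν) (hν1 : ν ≤ 1) (hM : 0 ≤ M)
    (hδ : 0 < δ) (hr : 0 ≤ r)
    (hL : ((1 - ν) / (1 + ν) * (1 / (2 * δ))) ^ ((1 - ν) / (1 + ν)) * M ^ (2 / (1 + ν)) ≤ L) :
    M / (1 + ν) * r ^ (1 + ν) ≤ L / 2 * r ^ 2 + δ := by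
  rcases hν1.eq_or_lt with rfl | hν1
  · norm_num at hL ⊢
    nlinarith [sq_nonneg r]
  set L₀ := ((1 - ν) / (1 + ν) * (1 / (2 * δ))) ^ ((1 - ν) / (1 + ν)) * M ^ (2 / (1 + ν))
  have h1ν : 0 < 1 + ν := by linarith
  have h1ν' : 0 < 1 - ν := by linarith
  have hL0 : 0 ≤ L := le_trans (by positivity) hL
  have hr2 : (r ^ 2) ^ ((1 + ν) / 2) = r ^ (1 + ν) := by
    rw [← Real.rpow_natCast, ← Real.rpow_mul hr]; congr 1; push_cast; ring
  have amgm := Real.geom_mean_le_arith_mean2_weighted (p₁ := L / (1 + ν) * r ^ 2)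
    (p₂ := 2 * δ / (1 - ν)) (w₁ := (1 + ν) / 2) (w₂ := (1 - ν) / 2) (by positivity)
    (by positivity) (by positivity) (by positivity) (by ring)
  calc M / (1 + ν) * r ^ (1 + ν)
      = (L₀ / (1 + ν)) ^ ((1 + ν) / 2) * (2 * δ / (1 - ν)) ^ ((1 - ν) / 2) * r ^ (1 + ν) := by
        rw [holder_threshold_mul_eq hν0 hν1 hM hδ]
    _ ≤ (L / (1 + ν)) ^ ((1 + ν) / 2) * (2 * δ / (1 - ν)) ^ ((1 - ν) / 2) * r ^ (1 + ν) := by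
        gcongr
    _ = (L / (1 + ν) * r ^ 2) ^ ((1 + ν) / 2) * (2 * δ / (1 - ν)) ^ ((1 - ν) / 2) := by
        rw [Real.mul_rpow (by positivity) (by positivity), hr2]; ring
    _ ≤ L / 2 * r ^ 2 + δ := by
        convert amgm using 1; field_simp

theorem holder_gradient_descent_lemma
    {E : Type*} [NormedAddCommGroup E] [InnerProductSpace ℝ E]
    (Q : Set E) (hQ : Convex ℝ Q) (f : E → ℝ) (g : E → E) (ν M : ℝ)
    (hν0 : 0 ≤ ν) (hν1 : ν ≤ 1) (hM : 0 < M)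
    (hconv : ∀ x ∈ Q, ∀ y ∈ Q, f x + ⟪g x, y - x⟫ ≤ f y)
    (hHolder : ∀ x ∈ Q, ∀ y ∈ Q, ‖g x - g y‖ ≤ M * ‖x - y‖ ^ ν) :
    ∀ δ : ℝ, 0 < δ →
      ∀ L : ℝ,
        L ≥ ((1 - ν) / (1 + ν) * (1 / (2 * δ))) ^ ((1 - ν) / (1 + ν)) * M ^ (2 / (1 + ν)) →
        ∀ x ∈ Q, ∀ y ∈ Q,
          f y ≤ f x + ⟪g x, y - x⟫ + L / 2 * ‖x - y‖ ^ 2 + δ := by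
  intro δ hδ L hL x hx y hy
  have hgap := hQ.sub_sub_inner_le_of_holder hν0 hM.le hconv hHolder hx hy
  have hsplit := mul_rpow_one_add_le_sq_add hν0 hν1 hM.le hδ (norm_nonneg (y - x)) hL
  rw [norm_sub_rev x y]
  linarith
end

section
/- Let p ∈ [1,2] and m ≥ 0 be an integer. Then 2·((m+2p)/(2p))^{2(p−1)} ≥ ((m+1+2p)/(2p))^{2(p−1)} − ((m+1+2p)/(2p))^{p−1}. -/
lemma aux_rpow_add_le_add_rpow {q : ℝ} (x y : ℝ) (hx : 0 ≤ x) (hy : 0 ≤ y)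
    (h0 : 0 ≤ q) (h1 : q ≤ 1) : (x + y) ^ q ≤ x ^ q + y ^ q := by
  lift x to NNReal using hx
  lift y to NNReal using hy
  exact_mod_cast NNReal.rpow_add_le_add_rpow x y h0 h1

theorem power_policy_key_inequality (p : ℝ) (hp1 : 1 ≤ p) (hp2 : p ≤ 2) (m : ℕ) :
    2 * ((m + 2 * p) / (2 * p)) ^ (2 * (p - 1)) ≥
      ((m + 1 + 2 * p) / (2 * p)) ^ (2 * (p - 1)) -
        ((m + 1 + 2 * p) / (2 * p)) ^ (p - 1) := by
  have hp : (0:ℝ) < p := by linarith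
  have hm : (0:ℝ) ≤ (m:ℝ) := Nat.cast_nonneg m
  set a : ℝ := (m + 2*p)/(2*p) with ha
  set b : ℝ := (m + 1 + 2*p)/(2*p) with hb
  have ha0 : 0 ≤ a := by positivity
  have hb0 : 0 ≤ b := by positivity
  have hq0 : 0 ≤ p - 1 := by linarith
  have hq1 : p - 1 ≤ 1 := by linarith
  set Y : ℝ := (m + 1 + 2*p)/(2*p^2) with hY
  have hY0 : 0 ≤ Y := by positivity
  have hYb : Y ≤ b := by
    rw [hY, hb, div_le_div_iff₀ (by positivity) (by positivity)]
    nlinarith [mul_nonneg (by linarith : (0:ℝ) ≤ (m:ℝ)+1+2*p) (by nlinarith : (0:ℝ) ≤ p^2 - p)]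
  have hb2 : b^2 ≤ a^2 + Y := by
    rw [ha, hb, hY, div_pow, div_pow,
      div_add_div _ _ (by positivity) (by positivity),
      div_le_div_iff₀ (by positivity) (by positivity)]
    ring_nf
    nlinarith [sq_nonneg p, hp, hm]
  have hsq : ∀ c : ℝ, 0 ≤ c → c ^ (2*(p-1)) = (c^2) ^ (p-1) := by
    intro c hc
    rw [← Real.rpow_natCast c 2, ← Real.rpow_mul hc]
    norm_num
  rw [hsq a ha0, hsq b hb0]
  have h2 : (b^2) ^ (p-1) ≤ (a^2 + Y) ^ (p-1) :=
    Real.rpow_le_rpow (sq_nonneg b) hb2 hq0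
  have h3 : (a^2 + Y) ^ (p-1) ≤ (a^2) ^ (p-1) + Y ^ (p-1) :=
    aux_rpow_add_le_add_rpow _ _ (sq_nonneg a) hY0 hq0 hq1
  have h4 : Y ^ (p-1) ≤ b ^ (p-1) := Real.rpow_le_rpow hY0 hYb hq0
  have h5 : 0 ≤ (a^2) ^ (p-1) := Real.rpow_nonneg (sq_nonneg a) _
  linarith
end
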